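/- arXiv:hep-th/0610137 — 2 statements merged into one kernel-verified Lean document; each statement's English description precedes it below -/
import Mathlib

section
/- Let m ∈ ℤ^7 with coordinates (m_qua, m_gho, m_glu, m_quaglu, m_ghoglu, m_glu3, m_glu4). Suppose m and m' are both solutions of the linear system: (a) m_qua + m_gho + m_glu − m_quaglu − m_ghoglu − m_glu3 − m_glu4 = c1; (b) m_quaglu − m_qua = c2; (c) m_quaglu + m_ghoglu + m_glu3 + 2·m_glu4 = c3; (d) m_ghoglu − m_gho = c4, for fixed constants c1, c2, c3, c4. Then m' − m is an integer linear combination of the three vectors I = (1,0,0,1,0,1,−1), II = (0,1,0,0,1,1,−1), III = (0,0,1,0,0,2,−1). -/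
private lemma cv5 (a b c d e f g : ℤ) : ![a,b,c,d,e,f,g] (5 : Fin 7) = f := rfl
private lemma cv6 (a b c d e f g : ℤ) : ![a,b,c,d,e,f,g] (6 : Fin 7) = g := rfl

/-- Two `(L,r)`-admissible vectors of QCD vertex/edge multiplicities differ by an integer
linear combination of the three elementary steps I, II, III.
Coordinates: `(m 0, …, m 6) = (m_qua, m_gho, m_glu, m_quaglu, m_ghoglu, m_glu3, m_glu4)`. -/
theorem admissible_vectors_differ_by_steps (c1 c2 c3 c4 : ℤ) (m m' : Fin 7 → ℤ)
    (ha : m 0 + m 1 + m 2 - m 3 - m 4 - m 5 - m 6 = c1)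
    (hb : m 3 - m 0 = c2)
    (hc : m 3 + m 4 + m 5 + 2 * m 6 = c3)
    (hd : m 4 - m 1 = c4)
    (ha' : m' 0 + m' 1 + m' 2 - m' 3 - m' 4 - m' 5 - m' 6 = c1)
    (hb' : m' 3 - m' 0 = c2)
    (hc' : m' 3 + m' 4 + m' 5 + 2 * m' 6 = c3)
    (hd' : m' 4 - m' 1 = c4) :
    ∃ a b c : ℤ,
      m' - m = a • (![1, 0, 0, 1, 0, 1, -1] : Fin 7 → ℤ)
        + b • (![0, 1, 0, 0, 1, 1, -1] : Fin 7 → ℤ)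
        + c • (![0, 0, 1, 0, 0, 2, -1] : Fin 7 → ℤ) := by
  refine ⟨m' 0 - m 0, m' 1 - m 1, m' 2 - m 2, ?_⟩
  funext i
  fin_cases i <;>
    simp [Pi.sub_apply, Pi.add_apply, Pi.smul_apply, smul_eq_mul, Matrix.cons_val_succ, Matrix.cons_val_zero, cv5, cv6] <;> omega
end

section
/- Let X be a finite type of 'graphs' with a symmetry weight Sym : X → ℕ+ and let n_e : Multiset X → ℕ count elements belonging to a fixed subset E ⊆ X with multiplicity. For any function F : Multiset X → ℚ, ∑_{γ : Multiset X of fixed size} n_e(γ)/S(γ) · F(γ) = ∑_{γ_e ∈ E} ∑_{γ̃ : Multiset X} (1/(Sym(γ_e)·S(γ̃))) · F(γ̃ + {γ_e}), where S(γ) = (∏_a mult_γ(a)!)·∏_{a∈γ} Sym(a) and the inner sum ranges over multisets γ̃ such that γ̃ + {γ_e} has the fixed size. -/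
/-- The multiset exchange identity (Equation (15) of the paper): for a finite type `X` of
graphs with positive symmetry weights `Sym`, a distinguished subset `E`, and
`S(γ) = (∏_a mult_γ(a)!)·∏_{a∈γ} Sym(a)`, the multiplicity-weighted sum
`∑_γ n_e(γ)/S(γ)·F(γ)` over multisets of a fixed size equals the double sum
`∑_{γ_e ∈ E} ∑_{γ̃} F(γ̃ + {γ_e})/(Sym(γ_e)·S(γ̃))` over one marked component in `E` and the
remaining multiset (of size one less). -/
theorem multiset_exchange_identity {X : Type*} [Fintype X] [DecidableEq X]
    (sym : X → ℕ) (hSym : ∀ x, 0 < sym x) (E : Finset X)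
    (S : Multiset X → ℚ)
    (hS : ∀ γ : Multiset X,
      S γ = (∏ a ∈ γ.toFinset, (Nat.factorial (γ.count a) : ℚ)) *
        ((γ.map fun a => (sym a : ℚ)).prod))
    (F : Multiset X → ℚ) (k : ℕ) :
    ∑ γ : Sym X (k + 1),
        ((((γ : Multiset X).filter (· ∈ E)).card : ℚ) / S (γ : Multiset X)) *
          F (γ : Multiset X) =
      ∑ γe ∈ E, ∑ γt : Sym X k,
        (1 / ((sym γe : ℚ) * S (γt : Multiset X))) * F (γe ::ₘ (γt : Multiset X)) := by
  classical
  -- positivity of S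
  have hSpos : ∀ t : Multiset X, 0 < S t := by
    intro t
    rw [hS]
    apply mul_pos
    · exact Finset.prod_pos fun a _ => by positivity
    · apply Multiset.prod_pos
      intro q hq
      obtain ⟨a, _, rfl⟩ := Multiset.mem_map.mp hq
      exact_mod_cast hSym a
  -- S of a cons
  have hScons : ∀ (a : X) (t : Multiset X),
      S (a ::ₘ t) = ((t.count a + 1 : ℕ) : ℚ) * (sym a : ℚ) * S t := by
    intro a t
    rw [hS, hS]
    have hmap : ((a ::ₘ t).map fun b => (sym b : ℚ)).prod
        = (sym a : ℚ) * ((t.map fun b => (sym b : ℚ)).prod) := by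
      simp
    have hfac : (∏ b ∈ (a ::ₘ t).toFinset, (Nat.factorial ((a ::ₘ t).count b) : ℚ))
        = ((t.count a + 1 : ℕ) : ℚ) * ∏ b ∈ t.toFinset, (Nat.factorial (t.count b) : ℚ) := by
      rw [Multiset.toFinset_cons]
      by_cases h : a ∈ t.toFinset
      · rw [Finset.insert_eq_self.mpr h]
        rw [← Finset.mul_prod_erase _ _ h, ← Finset.mul_prod_erase _ _ h]
        have h1 : ∀ b ∈ t.toFinset.erase a,
            (Nat.factorial ((a ::ₘ t).count b) : ℚ) = (Nat.factorial (t.count b) : ℚ) := by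
          intro b hb
          rw [Multiset.count_cons_of_ne (Finset.ne_of_mem_erase hb)]
        rw [Finset.prod_congr rfl h1, Multiset.count_cons_self, Nat.factorial_succ]
        push_cast
        ring
      · rw [Finset.prod_insert h, Multiset.count_cons_self]
        have hct : t.count a = 0 := by
          simpa [Multiset.count_eq_zero] using fun hc => h (Multiset.mem_toFinset.mpr hc)
        have h1 : ∀ b ∈ t.toFinset,
            (Nat.factorial ((a ::ₘ t).count b) : ℚ) = (Nat.factorial (t.count b) : ℚ) := by
          intro b hb
          rw [Multiset.count_cons_of_ne]
          intro hba; exact h (hba ▸ hb)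
        rw [Finset.prod_congr rfl h1, hct]
        norm_num
    rw [hmap, hfac]
    ring
  -- rewrite each RHS term
  have hterm : ∀ (a : X) (t : Multiset X),
      (1 / ((sym a : ℚ) * S t)) * F (a ::ₘ t)
        = (((a ::ₘ t).count a : ℚ) / S (a ::ₘ t)) * F (a ::ₘ t) := by
    intro a t
    rw [hScons, Multiset.count_cons_self]
    have h1 : ((t.count a + 1 : ℕ) : ℚ) ≠ 0 := Nat.cast_ne_zero.mpr (Nat.succ_ne_zero _)
    have h2 : (sym a : ℚ) ≠ 0 := by exact_mod_cast (hSym a).ne'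
    have h3 : S t ≠ 0 := (hSpos t).ne'
    field_simp
  -- reindexing lemma
  have hreindex : ∀ a : X,
      ∑ γt : Sym X k, (((a ::ₘ (γt : Multiset X)).count a : ℚ) / S (a ::ₘ (γt : Multiset X)))
          * F (a ::ₘ (γt : Multiset X))
        = ∑ γ : Sym X (k + 1), (((γ : Multiset X).count a : ℚ) / S (γ : Multiset X))
          * F (γ : Multiset X) := by
    intro a
    set f : Sym X (k + 1) → ℚ := fun γ =>
      (((γ : Multiset X).count a : ℚ) / S (γ : Multiset X)) * F (γ : Multiset X) with hf
    have hinj : Function.Injective (fun s : Sym X k => a ::ₛ s) := by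
      intro s t h
      apply Subtype.ext
      have : (a ::ₘ (s : Multiset X)) = a ::ₘ (t : Multiset X) := by
        have := congrArg (fun z : Sym X (k+1) => (z : Multiset X)) h
        simpa [Sym.coe_cons] using this
      exact (Multiset.cons_inj_right a).mp this
    have hsub : (Finset.univ.image (fun s : Sym X k => a ::ₛ s)) ⊆ Finset.univ :=
      Finset.subset_univ _
    have hzero : ∀ γ ∈ (Finset.univ : Finset (Sym X (k+1))),
        γ ∉ Finset.univ.image (fun s : Sym X k => a ::ₛ s) → f γ = 0 := by
      intro γ _ hγ
      have hne : a ∉ (γ : Multiset X) := by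
        intro hmem
        apply hγ
        have hcard : ((γ : Multiset X).erase a).card = k := by
          have := γ.2
          rw [Multiset.card_erase_of_mem hmem]
          simp [this]
        exact Finset.mem_image.mpr ⟨Sym.mk ((γ : Multiset X).erase a) hcard, Finset.mem_univ _,
          Sym.coe_injective (by rw [Sym.coe_cons]; exact Multiset.cons_erase hmem)⟩
      rw [hf]
      simp [Multiset.count_eq_zero.mpr hne]
    calc ∑ γt : Sym X k, (((a ::ₘ (γt : Multiset X)).count a : ℚ) / S (a ::ₘ (γt : Multiset X)))
          * F (a ::ₘ (γt : Multiset X))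
        = ∑ s : Sym X k, f ((fun s : Sym X k => a ::ₛ s) s) := by
          apply Finset.sum_congr rfl
          intro s _
          simp [hf, Sym.coe_cons]
      _ = ∑ γ ∈ Finset.univ.image (fun s : Sym X k => a ::ₛ s), f γ :=
          (Finset.sum_image fun x _ y _ h => hinj h).symm
      _ = ∑ γ : Sym X (k+1), f γ := Finset.sum_subset hsub hzero
  -- count sum lemma
  have hcount : ∀ γ : Multiset X,
      ((γ.filter (· ∈ E)).card : ℚ) = ∑ a ∈ E, ((γ.count a : ℕ) : ℚ) := by
    intro γ
    have : (γ.filter (· ∈ E)).card = ∑ a ∈ E, γ.count a := by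
      induction γ using Multiset.induction with
      | empty => simp
      | cons a s ih =>
        by_cases ha : a ∈ E
        · simp [Multiset.filter_cons, ha, Multiset.count_cons, ih, Finset.sum_add_distrib,
            Finset.sum_ite_eq' E a (fun _ => 1)]
        · simp [Multiset.filter_cons, ha, Multiset.count_cons, ih, Finset.sum_add_distrib,
            Finset.sum_ite_eq' E a (fun _ => 1)]
    rw [this]
    push_cast
    ring
  -- put it together
  symm
  calc ∑ γe ∈ E, ∑ γt : Sym X k,
          (1 / ((sym γe : ℚ) * S (γt : Multiset X))) * F (γe ::ₘ (γt : Multiset X))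
      = ∑ γe ∈ E, ∑ γ : Sym X (k + 1),
          (((γ : Multiset X).count γe : ℚ) / S (γ : Multiset X)) * F (γ : Multiset X) := by
        refine Finset.sum_congr rfl fun γe _ => ?_
        refine Eq.trans ?_ (hreindex γe)
        exact Finset.sum_congr rfl fun γt _ => hterm γe (γt : Multiset X)
    _ = ∑ γ : Sym X (k + 1), ∑ γe ∈ E,
          (((γ : Multiset X).count γe : ℚ) / S (γ : Multiset X)) * F (γ : Multiset X) :=
        Finset.sum_comm
    _ = ∑ γ : Sym X (k + 1),
          ((((γ : Multiset X).filter (· ∈ E)).card : ℚ) / S (γ : Multiset X))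
            * F (γ : Multiset X) := by
        refine Finset.sum_congr rfl fun γ _ => ?_
        rw [hcount, Finset.sum_div, Finset.sum_mul]
end
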